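/- arXiv:1601.04737 — 2 statements merged into one kernel-verified Lean document; each statement's English description precedes it below -/
import Mathlib

section
/- Assume additionally γ·I ⪯ ∇²F(x) for all x with 0 < γ ≤ K, let 0 < ε < 1, β ∈ (0,1), 0 < θ₂ < 1, and let S be a sample of distinct indices of size s whose sub-sampled Hessian H = H(x) satisfies λ_min(H) ≥ (1−ε)γ. Take λ > λ_min(H), let Ĥ = P(λ; H), suppose 0 ≤ θ₁ ≤ (1/2)√( λ / max{λ, K̂_s} ), and let p satisfy ‖Ĥp + ∇F(x)‖ ≤ θ₁‖∇F(x)‖ and pᵀ∇F(x) ≤ −(1−θ₂) pᵀĤp. Then for any α satisfying the Armijo condition F(x+αp) ≤ F(x) + αβ pᵀ∇F(x), one has F(x+αp) − F(x*) ≤ (1 − αβγ / max{K̂_s, λ})(F(x) − F(x*)), and every step size α with 0 < α ≤ 2(1−θ₂)(1−β)(1−ε)/κ satisfies the Armijo condition. -/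
open scoped RealInnerProductSpace

/-!
Strong convexity gives the Polyak–Łojasiewicz inequality `2γ (F x - F y) ≤ ‖∇F x‖²` and the
upper Hessian bound gives the descent lemma, both by Taylor's formula along a segment.
In the eigenbasis of the sub-sampled Hessian `H`, the regularized `Ĥ` is diagonal with entries in
`[λ, max K̂_s λ]`, the upper end because a quadratic form of `H` is an average of `s` of the
`Kᵢ`, hence at most `K̂_s`. Coordinatewise AM-GM then turns the residual bound on `p` into
`⟪p, ∇F x⟫ ≤ -‖∇F x‖² / (2 max K̂_s λ)`, which with the Armijo condition and PL gives the rate.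
For the step-size claim, `⟪p, ∇F x⟫ ≤ -(1 - θ₂) (1 - ε) γ ‖p‖²` and the descent lemma show that
the Armijo condition holds for `α K ≤ 2 (1 - β) (1 - θ₂) (1 - ε) γ`.
-/

/-- The Hessian of `F : ℝ^d → ℝ` at `x`, as a continuous linear map,
obtained as the (Fréchet) derivative of the gradient. -/
noncomputable def hess {d : ℕ} (F : EuclideanSpace ℝ (Fin d) → ℝ)
    (x : EuclideanSpace ℝ (Fin d)) :
    EuclideanSpace ℝ (Fin d) →L[ℝ] EuclideanSpace ℝ (Fin d) :=
  fderiv ℝ (gradient F) x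

theorem add_add_half_le_of_le_deriv {φ φ' φ'' : ℝ → ℝ} {c : ℝ}
    (hφ : ∀ t, HasDerivAt φ (φ' t) t) (hφ' : ∀ t, HasDerivAt φ' (φ'' t) t)
    (hc : ∀ t, c ≤ φ'' t) : φ 0 + φ' 0 + c / 2 ≤ φ 1 := by
  have hslope : Monotone fun t => φ' t - c * t :=
    monotone_of_hasDerivAt_nonneg (f' := fun t => φ'' t - c)
      (fun t => ((hφ' t).sub ((hasDerivAt_id t).const_mul c)).congr_deriv (by simp))
      (fun t => sub_nonneg.2 (hc t))
  set g : ℝ → ℝ := fun t => φ t - φ' 0 * t - c / 2 * t ^ 2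
  have hg' : ∀ t, HasDerivAt g (φ' t - φ' 0 - c * t) t := fun t =>
    (((hφ t).sub ((hasDerivAt_id t).const_mul _)).sub
      ((hasDerivAt_pow 2 t).const_mul _)).congr_deriv (by simp; ring)
  have hg : MonotoneOn g (Set.Ici 0) :=
    monotoneOn_of_hasDerivWithinAt_nonneg (convex_Ici 0)
      (HasDerivAt.continuousOn fun t _ => hg' t) (fun t _ => (hg' t).hasDerivWithinAt)
      (fun t ht => by
        have := hslope (interior_subset ht : (0:ℝ) ≤ t)
        simp only at this
        linarith)
  have := hg Set.self_mem_Ici (Set.mem_Ici.2 zero_le_one) zero_le_one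
  simp only [g] at this
  linarith

section Taylor

variable {E : Type*} [NormedAddCommGroup E] [InnerProductSpace ℝ E]

theorem hasDerivAt_comp_add_smul {E' : Type*} [NormedAddCommGroup E'] [NormedSpace ℝ E']
    {G : E → E'} (hG : Differentiable ℝ G) (x v : E) (t : ℝ) :
    HasDerivAt (fun t : ℝ => G (x + t • v)) (fderiv ℝ G (x + t • v) v) t :=
  (hG _).hasFDerivAt.comp_hasDerivAt t
    ((((hasDerivAt_id t).smul_const v).const_add x).congr_deriv (one_smul ℝ v))

variable [CompleteSpace E] {F : E → ℝ}

theorem hasDerivAt_comp_add_smul_of_gradient (hF : Differentiable ℝ F) (x v : E) (t : ℝ) :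
    HasDerivAt (fun t : ℝ => F (x + t • v)) ⟪gradient F (x + t • v), v⟫ t :=
  (hasDerivAt_comp_add_smul hF x v t).congr_deriv
    (by rw [gradient, InnerProductSpace.toDual_symm_apply])

theorem hasDerivAt_inner_gradient_comp_add_smul (hF' : Differentiable ℝ (gradient F))
    (x v : E) (t : ℝ) :
    HasDerivAt (fun t : ℝ => ⟪gradient F (x + t • v), v⟫)
      ⟪fderiv ℝ (gradient F) (x + t • v) v, v⟫ t :=
  ((hasDerivAt_comp_add_smul hF' x v t).inner ℝ (hasDerivAt_const t v)).congr_deriv (by simp)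

theorem add_inner_gradient_add_le_of_le_hessian (hF : Differentiable ℝ F)
    (hF' : Differentiable ℝ (gradient F)) {a : ℝ}
    (ha : ∀ y w, a * ‖w‖ ^ 2 ≤ ⟪fderiv ℝ (gradient F) y w, w⟫) (x v : E) :
    F x + ⟪gradient F x, v⟫ + a / 2 * ‖v‖ ^ 2 ≤ F (x + v) := by
  have := add_add_half_le_of_le_deriv (hasDerivAt_comp_add_smul_of_gradient hF x v)
    (hasDerivAt_inner_gradient_comp_add_smul hF' x v) (fun t => ha _ v)
  simp only [zero_smul, add_zero, one_smul] at this
  linarith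

theorem le_add_inner_gradient_add_of_hessian_le (hF : Differentiable ℝ F)
    (hF' : Differentiable ℝ (gradient F)) {a : ℝ}
    (ha : ∀ y w, ⟪fderiv ℝ (gradient F) y w, w⟫ ≤ a * ‖w‖ ^ 2) (x v : E) :
    F (x + v) ≤ F x + ⟪gradient F x, v⟫ + a / 2 * ‖v‖ ^ 2 := by
  have := add_add_half_le_of_le_deriv (fun t => (hasDerivAt_comp_add_smul_of_gradient hF x v t).neg)
    (fun t => (hasDerivAt_inner_gradient_comp_add_smul hF' x v t).neg)
    (fun t => neg_le_neg (ha _ v))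
  simp only [Pi.neg_apply, zero_smul, add_zero, one_smul] at this
  linarith

theorem two_mul_sub_le_norm_gradient_sq {γ : ℝ} (hγ : 0 < γ) {x : E}
    (h : ∀ v, F x + ⟪gradient F x, v⟫ + γ / 2 * ‖v‖ ^ 2 ≤ F (x + v)) (y : E) :
    2 * γ * (F x - F y) ≤ ‖gradient F x‖ ^ 2 := by
  have hy := h (y - x)
  rw [add_sub_cancel] at hy
  have hcs := neg_le_of_abs_le (abs_real_inner_le_norm (gradient F x) (y - x))
  nlinarith [sq_nonneg (‖gradient F x‖ - γ * ‖y - x‖)]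

end Taylor

theorem ContDiff.differentiable_gradient {E : Type*} [NormedAddCommGroup E]
    [InnerProductSpace ℝ E] [CompleteSpace E] {F : E → ℝ} (hF : ContDiff ℝ 2 F) :
    Differentiable ℝ (gradient F) :=
  ((InnerProductSpace.toDual ℝ E).symm.contDiff.comp
    (hF.fderiv_right (m := 1) (by norm_num))).differentiable (by norm_num)

section Coordinates

variable {ι E : Type*} [Fintype ι] [NormedAddCommGroup E] [InnerProductSpace ℝ E]
  {b : OrthonormalBasis ι ℝ E}

theorem OrthonormalBasis.real_inner_eq_sum (b : OrthonormalBasis ι ℝ E) (u w : E) :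
    ⟪u, w⟫ = ∑ i, ⟪b i, u⟫ * ⟪b i, w⟫ := by
  simp_rw [← b.sum_inner_mul_inner u w, real_inner_comm u]

theorem OrthonormalBasis.norm_sq_eq_sum (b : OrthonormalBasis ι ℝ E) (u : E) :
    ‖u‖ ^ 2 = ∑ i, ⟪b i, u⟫ ^ 2 := by
  simp_rw [← b.sum_sq_norm_inner_right u, Real.norm_eq_abs, sq_abs]

variable {T : E →L[ℝ] E} {μ : ι → ℝ}

theorem OrthonormalBasis.inner_apply_of_apply_eq_smul (hT : ∀ i, T (b i) = μ i • b i)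
    (w : E) (i : ι) : ⟪b i, T w⟫ = μ i * ⟪b i, w⟫ := by
  classical
  conv_lhs => rw [← b.sum_repr' w]
  simp [map_sum, hT, inner_sum, real_inner_smul_right, orthonormal_iff_ite.1 b.orthonormal,
    mul_comm]

theorem OrthonormalBasis.mul_norm_sq_le_inner_apply (hT : ∀ i, T (b i) = μ i • b i) {m : ℝ}
    (hμ : ∀ i, m ≤ μ i) (w : E) : m * ‖w‖ ^ 2 ≤ ⟪w, T w⟫ := by
  rw [b.norm_sq_eq_sum, b.real_inner_eq_sum, Finset.mul_sum]
  refine Finset.sum_le_sum fun i _ => ?_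
  rw [b.inner_apply_of_apply_eq_smul hT]
  nlinarith [hμ i, sq_nonneg ⟪b i, w⟫]

theorem mul_le_sq_div_sub_of_le_of_le {lam M μ P G : ℝ} (hlam : 0 < lam) (hμl : lam ≤ μ)
    (hμu : μ ≤ M) : P * G ≤ (μ * P + G) ^ 2 / lam - 3 / 4 * G ^ 2 / M := by
  have hμ : 0 < μ := hlam.trans_le hμl
  -- AM-GM: `(μ P + G) G ≤ (μ P + G)² + G² / 4`
  have hμPG : μ * (P * G) ≤ (μ * P + G) ^ 2 - 3 / 4 * G ^ 2 := by
    nlinarith [sq_nonneg (μ * P + G - G / 2)]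
  calc P * G ≤ ((μ * P + G) ^ 2 - 3 / 4 * G ^ 2) / μ := by
        rw [le_div_iff₀ hμ]; linarith
    _ = (μ * P + G) ^ 2 / μ - 3 / 4 * G ^ 2 / μ := sub_div _ _ _
    _ ≤ (μ * P + G) ^ 2 / lam - 3 / 4 * G ^ 2 / M := by
        gcongr

theorem sq_le_div_four_mul_of_le_half_sqrt {θ a b : ℝ} (hθ : 0 ≤ θ) (hab : 0 ≤ a / b)
    (h : θ ≤ 1 / 2 * √(a / b)) : θ ^ 2 ≤ a / (4 * b) :=
  calc θ ^ 2 ≤ (1 / 2 * √(a / b)) ^ 2 := pow_le_pow_left₀ hθ h 2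
    _ = a / (4 * b) := by rw [mul_pow, Real.sq_sqrt hab]; ring

theorem OrthonormalBasis.inner_le_neg_norm_sq_div (hT : ∀ i, T (b i) = μ i • b i)
    {lam M θ : ℝ} (hlam : 0 < lam) (hμl : ∀ i, lam ≤ μ i) (hμu : ∀ i, μ i ≤ M)
    (hθ : θ ^ 2 ≤ lam / (4 * M)) {p g : E} (hp : ‖T p + g‖ ≤ θ * ‖g‖) :
    ⟪p, g⟫ ≤ -(‖g‖ ^ 2 / (2 * M)) := by
  have hres : ∑ i, (μ i * ⟪b i, p⟫ + ⟪b i, g⟫) ^ 2 ≤ lam / (4 * M) * ‖g‖ ^ 2 := by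
    have hsq : ∑ i, (μ i * ⟪b i, p⟫ + ⟪b i, g⟫) ^ 2 = ‖T p + g‖ ^ 2 := by
      simp_rw [b.norm_sq_eq_sum, inner_add_right, b.inner_apply_of_apply_eq_smul hT]
    rw [hsq]
    calc ‖T p + g‖ ^ 2 ≤ (θ * ‖g‖) ^ 2 := pow_le_pow_left₀ (norm_nonneg _) hp 2
      _ ≤ lam / (4 * M) * ‖g‖ ^ 2 := by rw [mul_pow]; gcongr
  calc ⟪p, g⟫ = ∑ i, ⟪b i, p⟫ * ⟪b i, g⟫ := b.real_inner_eq_sum p g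
    _ ≤ ∑ i, ((μ i * ⟪b i, p⟫ + ⟪b i, g⟫) ^ 2 / lam - 3 / 4 * ⟪b i, g⟫ ^ 2 / M) :=
        Finset.sum_le_sum fun i _ => mul_le_sq_div_sub_of_le_of_le hlam (hμl i) (hμu i)
    _ = (∑ i, (μ i * ⟪b i, p⟫ + ⟪b i, g⟫) ^ 2) / lam - 3 / 4 * ‖g‖ ^ 2 / M := by
        rw [Finset.sum_sub_distrib, ← Finset.sum_div, ← Finset.sum_div, ← Finset.mul_sum,
          b.norm_sq_eq_sum]
    _ ≤ ‖g‖ ^ 2 / (4 * M) - 3 / 4 * ‖g‖ ^ 2 / M := by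
        refine sub_le_sub_right ?_ _
        rw [div_le_iff₀ hlam]
        linarith [show lam / (4 * M) * ‖g‖ ^ 2 = ‖g‖ ^ 2 / (4 * M) * lam by ring]
    _ = -(‖g‖ ^ 2 / (2 * M)) := by ring

end Coordinates

section Sampling

open Finset

variable {ι : Type*} {K : ι → ℝ}

theorem Finset.sum_le_sum_of_card_eq_of_forall_le {T Q : Finset ι} (hcard : #T = #Q)
    (hQ : ∀ i ∈ Q, ∀ j ∉ Q, K j ≤ K i) : ∑ i ∈ T, K i ≤ ∑ i ∈ Q, K i := by
  classical
  rw [← sum_inter_add_sum_sdiff T Q K, ← sum_inter_add_sum_sdiff Q T K, inter_comm]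
  refine add_le_add_right ?_ _
  let e := (T \ Q).equivOfCardEq (card_sdiff_comm hcard)
  calc ∑ i ∈ T \ Q, K i = ∑ i : ↥(T \ Q), K i := (sum_coe_sort _ _).symm
    _ ≤ ∑ i : ↥(T \ Q), K (e i) := sum_le_sum fun i _ =>
        hQ _ (mem_sdiff.1 (e i).2).1 _ (mem_sdiff.1 i.2).2
    _ = ∑ j ∈ Q \ T, K j := by rw [e.sum_comp (fun j => K j), sum_coe_sort]

theorem sum_comp_le_sum_of_injective {κ : Type*} [Fintype κ] {S : κ → ι}
    (hS : Function.Injective S) {Q : Finset ι} (hQcard : #Q = Fintype.card κ)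
    (hQ : ∀ i ∈ Q, ∀ j ∉ Q, K j ≤ K i) : ∑ j, K (S j) ≤ ∑ i ∈ Q, K i := by
  classical
  rw [← sum_image fun a _ b _ h => hS h]
  exact sum_le_sum_of_card_eq_of_forall_le (by rw [card_image_of_injective _ hS, hQcard]; rfl) hQ

end Sampling

section Hessian

variable {E : Type*} [NormedAddCommGroup E] [InnerProductSpace ℝ E]

theorem real_inner_apply_self_of_apply_eq_smul {T : E →L[ℝ] E} {v : E} {μ : ℝ} (hv : ‖v‖ = 1)
    (h : T v = μ • v) : ⟪T v, v⟫ = μ := by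
  rw [h, real_inner_smul_left, real_inner_self_eq_norm_sq, hv, one_pow, mul_one]

theorem real_inner_smul_sum_apply_le {ι κ : Type*} [Fintype κ] {A : ι → E →L[ℝ] E}
    {K : ι → ℝ} (hA : ∀ i v, ⟪A i v, v⟫ ≤ K i * ‖v‖ ^ 2) {S : κ → ι}
    (hS : Function.Injective S) {Q : Finset ι} (hQcard : Q.card = Fintype.card κ)
    (hQ : ∀ i ∈ Q, ∀ j ∉ Q, K j ≤ K i) (v : E) :
    ⟪((Fintype.card κ : ℝ)⁻¹ • ∑ j, A (S j)) v, v⟫ ≤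
      (∑ i ∈ Q, K i) / Fintype.card κ * ‖v‖ ^ 2 := by
  rw [smul_apply, real_inner_smul_left, _root_.sum_apply,
    sum_inner, div_eq_inv_mul, mul_assoc]
  gcongr
  calc ∑ j, ⟪A (S j) v, v⟫ ≤ ∑ j, K (S j) * ‖v‖ ^ 2 := Finset.sum_le_sum fun j _ => hA _ v
    _ ≤ (∑ i ∈ Q, K i) * ‖v‖ ^ 2 := by
        rw [← Finset.sum_mul]
        gcongr
        exact sum_comp_le_sum_of_injective hS hQcard hQ

end Hessian

section Armijo

variable {E : Type*} [NormedAddCommGroup E] [InnerProductSpace ℝ E] [CompleteSpace E]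
  {F : E → ℝ} {x p : E}

theorem armijo_of_mul_le {L c α β : ℝ}
    (hsmooth : ∀ v, F (x + v) ≤ F x + ⟪gradient F x, v⟫ + L / 2 * ‖v‖ ^ 2)
    (hdesc : ⟪p, gradient F x⟫ ≤ -(c * ‖p‖ ^ 2)) (hα : 0 ≤ α) (hβ : β ≤ 1)
    (hstep : α * L ≤ 2 * (1 - β) * c) :
    F (x + α • p) ≤ F x + α * β * ⟪p, gradient F x⟫ := by
  have h := hsmooth (α • p)
  rw [real_inner_smul_right, norm_smul, mul_pow, Real.norm_eq_abs, sq_abs,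
    real_inner_comm] at h
  nlinarith [mul_le_mul_of_nonneg_left hdesc (mul_nonneg hα (sub_nonneg.2 hβ)),
    mul_le_mul_of_nonneg_left hstep (mul_nonneg hα (sq_nonneg ‖p‖))]

theorem sub_le_one_sub_mul_of_armijo {α β γ M : ℝ} {y : E} (hαβ : 0 ≤ α * β) (hM : 0 < M)
    (hdesc : ⟪p, gradient F x⟫ ≤ -(‖gradient F x‖ ^ 2 / (2 * M)))
    (hPL : 2 * γ * (F x - F y) ≤ ‖gradient F x‖ ^ 2)
    (harmijo : F (x + α • p) ≤ F x + α * β * ⟪p, gradient F x⟫) :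
    F (x + α • p) - F y ≤ (1 - α * β * γ / M) * (F x - F y) := by
  have hPL' : γ * (F x - F y) / M ≤ ‖gradient F x‖ ^ 2 / (2 * M) := by
    rw [div_le_div_iff₀ hM (by positivity)]
    nlinarith
  calc F (x + α • p) - F y ≤ F x - F y - α * β * (‖gradient F x‖ ^ 2 / (2 * M)) := by
        nlinarith [mul_le_mul_of_nonneg_left hdesc hαβ]
    _ ≤ F x - F y - α * β * (γ * (F x - F y) / M) := by gcongr
    _ = (1 - α * β * γ / M) * (F x - F y) := by ring

end Armijo

theorem stmt_5_general {d n s : ℕ}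
    (f : Fin n → EuclideanSpace ℝ (Fin d) → ℝ) (K : Fin n → ℝ)
    (F : EuclideanSpace ℝ (Fin d) → ℝ)
    (γ Kc Khats β ε θ₁ θ₂ lam : ℝ) (x xstar p : EuclideanSpace ℝ (Fin d))
    (S : Fin s → Fin n)
    (b : OrthonormalBasis (Fin d) ℝ (EuclideanSpace ℝ (Fin d))) (ev : Fin d → ℝ)
    (Hhat : EuclideanSpace ℝ (Fin d) →L[ℝ] EuclideanSpace ℝ (Fin d))
    -- each fᵢ is twice continuously differentiable, convex, with `∇²fᵢ ⪯ Kᵢ I`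
    (hf : ∀ i, ContDiff ℝ 2 (f i))
    (hfK : ∀ i y v, ⟪(hess (f i) y) v, v⟫ ≤ K i * ‖v‖ ^ 2)
    -- `F = (1/n) ∑ fᵢ`
    (hF : ∀ y, F y = (1 / n : ℝ) * ∑ i, f i y)
    -- `γ I ⪯ ∇²F ⪯ K I` with `0 < γ ≤ K`
    (hγ : 0 < γ) (hγK : γ ≤ Kc)
    (hFlow : ∀ y v, γ * ‖v‖ ^ 2 ≤ ⟪(hess F y) v, v⟫)
    (hFup : ∀ y v, ⟪(hess F y) v, v⟫ ≤ Kc * ‖v‖ ^ 2)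
    -- `K̂_s` is the average of the `s` largest `Kᵢ`'s
    (hKhats : ∃ Q : Finset (Fin n), Q.card = s ∧
        (∀ i ∈ Q, ∀ j ∉ Q, K j ≤ K i) ∧ Khats = (∑ i ∈ Q, K i) / s)
    (hβ : 0 < β) (hβ1 : β < 1) (hε1 : ε < 1)
    (hθ₂1 : θ₂ < 1)
    -- the sample consists of distinct indices
    (hSinj : Function.Injective S)
    -- `λ_min(H) ≥ (1-ε)γ` for the sub-sampled Hessian `H = H(x)`
    (hH : ∀ v, (1 - ε) * γ * ‖v‖ ^ 2 ≤
        ⟪((s : ℝ)⁻¹ • ∑ j, hess (f (S j)) x) v, v⟫)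
    -- spectral decomposition of `H`: `b` is an orthonormal eigenbasis, eigenvalues `ev`
    (heig : ∀ i, ((s : ℝ)⁻¹ • ∑ j, hess (f (S j)) x) (b i) = ev i • b i)
    -- `λ > λ_min(H)`
    (hlam : ∃ i, ev i < lam)
    -- `Ĥ = P(λ; H)`: the spectral regularization of `H`
    (hHhat : ∀ i, Hhat (b i) = max (ev i) lam • b i)
    -- `0 ≤ θ₁ ≤ (1/2)√(λ / max{λ, K̂_s})`
    (hθ₁0 : 0 ≤ θ₁) (hθ₁le : θ₁ ≤ (1 / 2) * Real.sqrt (lam / max lam Khats))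
    -- inexactness conditions on the update direction `p`
    (hp₁ : ‖Hhat p + gradient F x‖ ≤ θ₁ * ‖gradient F x‖)
    (hp₂ : ⟪p, gradient F x⟫ ≤ -(1 - θ₂) * ⟪p, Hhat p⟫) :
    -- any `α > 0` satisfying the Armijo condition yields the stated linear rate
    (∀ α : ℝ, 0 < α → F (x + α • p) ≤ F x + α * β * ⟪p, gradient F x⟫ →
        F (x + α • p) - F xstar ≤
          (1 - α * β * γ / max Khats lam) * (F x - F xstar)) ∧
    -- and any `0 < α ≤ 2(1-θ₂)(1-β)(1-ε)/κ` satisfies the Armijo condition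
    (∀ α : ℝ, 0 < α → α ≤ 2 * (1 - θ₂) * (1 - β) * (1 - ε) / (Kc / γ) →
        F (x + α • p) ≤ F x + α * β * ⟪p, gradient F x⟫) := by
  have hF2 : ContDiff ℝ 2 F := by
    rw [funext hF]; exact contDiff_const.mul (ContDiff.sum fun i _ => hf i)
  have hTaylor_low := add_inner_gradient_add_le_of_le_hessian
    (hF2.differentiable (by norm_num)) hF2.differentiable_gradient hFlow x
  have hTaylor_up := le_add_inner_gradient_add_of_hessian_le
    (hF2.differentiable (by norm_num)) hF2.differentiable_gradient hFup x
  have hev : ∀ i, ⟪((s : ℝ)⁻¹ • ∑ j, hess (f (S j)) x) (b i), b i⟫ = ev i := fun i =>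
    real_inner_apply_self_of_apply_eq_smul (b.orthonormal.1 i) (heig i)
  have hev_low : ∀ i, (1 - ε) * γ ≤ ev i := fun i => by
    have := hH (b i)
    rwa [hev i, b.orthonormal.1 i, one_pow, mul_one] at this
  have hev_up : ∀ i, ev i ≤ Khats := fun i => by
    obtain ⟨Q, hQcard, hQ, rfl⟩ := hKhats
    have := real_inner_smul_sum_apply_le (hfK · x) hSinj (by simpa using hQcard) hQ (b i)
    rwa [Fintype.card_fin, hev i, b.orthonormal.1 i, one_pow, mul_one] at this
  obtain ⟨i₀, hi₀⟩ := hlam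
  have hlam : 0 < lam := by nlinarith [hev_low i₀]
  have hM : 0 < max Khats lam := hlam.trans_le (le_max_right _ _)
  have hdesc_grad : ⟪p, gradient F x⟫ ≤ -(‖gradient F x‖ ^ 2 / (2 * max Khats lam)) :=
    b.inner_le_neg_norm_sq_div hHhat hlam (fun i => le_max_right _ _)
      (fun i => max_le ((hev_up i).trans (le_max_left _ _)) (le_max_right _ _))
      (sq_le_div_four_mul_of_le_half_sqrt hθ₁0 (div_nonneg hlam.le hM.le)
        (max_comm lam Khats ▸ hθ₁le)) hp₁
  have hdesc_norm : ⟪p, gradient F x⟫ ≤ -((1 - θ₂) * ((1 - ε) * γ) * ‖p‖ ^ 2) := by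
    have := b.mul_norm_sq_le_inner_apply hHhat (fun i => (hev_low i).trans (le_max_left _ lam)) p
    nlinarith [mul_le_mul_of_nonneg_left this (sub_nonneg.2 hθ₂1.le)]
  refine ⟨fun α hα harmijo => sub_le_one_sub_mul_of_armijo (by positivity) hM hdesc_grad
    (two_mul_sub_le_norm_gradient_sq hγ hTaylor_low xstar) harmijo,
    fun α hα hαle => armijo_of_mul_le hTaylor_up hdesc_norm hα.le hβ1.le ?_⟩
  rw [le_div_iff₀ (div_pos (hγ.trans_le hγK) hγ)] at hαle
  calc α * Kc = α * (Kc / γ) * γ := by field_simp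
    _ ≤ 2 * (1 - θ₂) * (1 - β) * (1 - ε) * γ := by gcongr
    _ = 2 * (1 - β) * ((1 - θ₂) * ((1 - ε) * γ)) := by ring

theorem stmt_5 {d n s : ℕ} (hn : 0 < n) (hs : 0 < s)
    (f : Fin n → EuclideanSpace ℝ (Fin d) → ℝ) (K : Fin n → ℝ)
    (F : EuclideanSpace ℝ (Fin d) → ℝ)
    (γ Kc Khats β ε θ₁ θ₂ lam : ℝ) (x xstar p : EuclideanSpace ℝ (Fin d))
    (S : Fin s → Fin n)
    (b : OrthonormalBasis (Fin d) ℝ (EuclideanSpace ℝ (Fin d))) (ev : Fin d → ℝ)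
    (Hhat : EuclideanSpace ℝ (Fin d) →L[ℝ] EuclideanSpace ℝ (Fin d))
    -- each fᵢ is twice continuously differentiable, convex, with `∇²fᵢ ⪯ Kᵢ I`
    (hf : ∀ i, ContDiff ℝ 2 (f i))
    (hKpos : ∀ i, 0 < K i)
    (hfpsd : ∀ i y v, 0 ≤ ⟪(hess (f i) y) v, v⟫)
    (hfK : ∀ i y v, ⟪(hess (f i) y) v, v⟫ ≤ K i * ‖v‖ ^ 2)
    -- `F = (1/n) ∑ fᵢ`
    (hF : ∀ y, F y = (1 / n : ℝ) * ∑ i, f i y)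
    -- `γ I ⪯ ∇²F ⪯ K I` with `0 < γ ≤ K`
    (hγ : 0 < γ) (hγK : γ ≤ Kc)
    (hFlow : ∀ y v, γ * ‖v‖ ^ 2 ≤ ⟪(hess F y) v, v⟫)
    (hFup : ∀ y v, ⟪(hess F y) v, v⟫ ≤ Kc * ‖v‖ ^ 2)
    -- `xstar` is the (unique) minimizer of `F`
    (hmin : ∀ y, F xstar ≤ F y)
    -- `K̂_s` is the average of the `s` largest `Kᵢ`'s
    (hKhats : ∃ Q : Finset (Fin n), Q.card = s ∧
        (∀ i ∈ Q, ∀ j ∉ Q, K j ≤ K i) ∧ Khats = (∑ i ∈ Q, K i) / s)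
    (hβ : 0 < β) (hβ1 : β < 1) (hε : 0 < ε) (hε1 : ε < 1)
    (hθ₂0 : 0 < θ₂) (hθ₂1 : θ₂ < 1)
    -- the sample consists of distinct indices
    (hSinj : Function.Injective S)
    -- `λ_min(H) ≥ (1-ε)γ` for the sub-sampled Hessian `H = H(x)`
    (hH : ∀ v, (1 - ε) * γ * ‖v‖ ^ 2 ≤
        ⟪((s : ℝ)⁻¹ • ∑ j, hess (f (S j)) x) v, v⟫)
    -- spectral decomposition of `H`: `b` is an orthonormal eigenbasis, eigenvalues `ev`
    (heig : ∀ i, ((s : ℝ)⁻¹ • ∑ j, hess (f (S j)) x) (b i) = ev i • b i)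
    -- `λ > λ_min(H)`
    (hlam : ∃ i, ev i < lam)
    -- `Ĥ = P(λ; H)`: the spectral regularization of `H`
    (hHhat : ∀ i, Hhat (b i) = max (ev i) lam • b i)
    -- `0 ≤ θ₁ ≤ (1/2)√(λ / max{λ, K̂_s})`
    (hθ₁0 : 0 ≤ θ₁) (hθ₁le : θ₁ ≤ (1 / 2) * Real.sqrt (lam / max lam Khats))
    -- inexactness conditions on the update direction `p`
    (hp₁ : ‖Hhat p + gradient F x‖ ≤ θ₁ * ‖gradient F x‖)
    (hp₂ : ⟪p, gradient F x⟫ ≤ -(1 - θ₂) * ⟪p, Hhat p⟫) :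
    -- any `α > 0` satisfying the Armijo condition yields the stated linear rate
    (∀ α : ℝ, 0 < α → F (x + α • p) ≤ F x + α * β * ⟪p, gradient F x⟫ →
        F (x + α • p) - F xstar ≤
          (1 - α * β * γ / max Khats lam) * (F x - F xstar)) ∧
    -- and any `0 < α ≤ 2(1-θ₂)(1-β)(1-ε)/κ` satisfies the Armijo condition
    (∀ α : ℝ, 0 < α → α ≤ 2 * (1 - θ₂) * (1 - β) * (1 - ε) / (Kc / γ) →
        F (x + α • p) ≤ F x + α * β * ⟪p, gradient F x⟫) :=
  stmt_5_general f K F γ Kc Khats β ε θ₁ θ₂ lam x xstar p S b ev Hhat hf hfK hF hγ hγK hFlow hFup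
    hKhats hβ hβ1 hε1 hθ₂1 hSinj hH heig hlam hHhat hθ₁0 hθ₁le hp₁ hp₂
end

section
/- Assume additionally γ·I ⪯ ∇²F(x) for all x with 0 < γ ≤ K, let 0 < ε < 1, β ∈ (0,1), 0 < θ₂ < 1, λ ≥ 0, and let S be a sample of distinct indices of size s whose sub-sampled Hessian H = H(x) satisfies λ_min(H) ≥ (1−ε)γ. Let Ĥ = H + λ·I, suppose 0 ≤ θ₁ ≤ (1/2)√( ((1−ε)γ + λ)/(K̂_s + λ) ), and let p ∈ ℝ^p satisfy ‖Ĥp + ∇F(x)‖ ≤ θ₁‖∇F(x)‖ and pᵀ∇F(x) ≤ −(1−θ₂) pᵀĤp. Then for any α satisfying the Armijo condition F(x+αp) ≤ F(x) + αβ pᵀ∇F(x), one has F(x+αp) − F(x*) ≤ (1 − αβγ/(K̂_s + λ))(F(x) − F(x*)), and every step size α with 0 < α ≤ 2(1−θ₂)(1−β)((1−ε)γ + λ)/K satisfies the Armijo condition. -/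
open scoped RealInnerProductSpace

/-- The ridge-regularized sub-sampled Hessian `Ĥ(x) = H(x) + λ I`, where
`H(x) = (1/s) ∑_{j∈S} ∇²f_{S j}(x)`. -/
noncomputable def ridgeHess {d n s : ℕ} (f : Fin n → EuclideanSpace ℝ (Fin d) → ℝ)
    (S : Fin s → Fin n) (lam : ℝ) (x : EuclideanSpace ℝ (Fin d)) :
    EuclideanSpace ℝ (Fin d) →L[ℝ] EuclideanSpace ℝ (Fin d) :=
  ((s : ℝ)⁻¹ • ∑ j, hess (f (S j)) x) +
    lam • ContinuousLinearMap.id ℝ (EuclideanSpace ℝ (Fin d))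

/-!
Write `g = ∇F(x)` and `Ĥ` for the ridge-regularized sub-sampled Hessian. Then `m I ⪯ Ĥ ⪯ M I`
with `m = (1-ε)γ + λ` and `M = K̂_s + λ`, the upper bound because `s` distinct indices carry at
most the `s` largest curvature constants. With `z = Ĥ⁻¹ g` one has
`⟪p, g⟫ = ⟪Ĥp + g, z⟫ - ⟪g, z⟫`; Cauchy–Schwarz for the form `⟪Ĥ·, ·⟫` gives `‖g‖² ≤ M ⟪g, z⟫`,
and together with `m ‖z‖² ≤ ⟪g, z⟫` the bound on `θ₁` makes the first term at most half the
second, so `⟪p, g⟫ ≤ -‖g‖² / (2M)`. Strong convexity gives the Polyak–Łojasiewicz bound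
`F x - F y ≤ ‖g‖² / (2γ)`, which turns the Armijo decrease into the linear rate. The admissible
step sizes come from the quadratic upper model `F (x + αp) ≤ F x + α⟪g, p⟫ + Kα²‖p‖²/2` and
`⟪p, g⟫ ≤ -(1-θ₂) m ‖p‖²`.
-/

section Gradient

variable {E : Type*} [NormedAddCommGroup E] [InnerProductSpace ℝ E] [CompleteSpace E]
  {φ : E → ℝ}

lemma hasDerivAt_apply_add_smul (hφ : Differentiable ℝ φ) (x v : E) (t : ℝ) :
    HasDerivAt (fun t : ℝ => φ (x + t • v)) ⟪gradient φ (x + t • v), v⟫ t := by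
  rw [inner_gradient_left]
  exact (hφ _).hasFDerivAt.comp_hasDerivAt t
    (((hasDerivAt_id t).smul_const v).const_add x |>.congr_deriv (one_smul ℝ v))

open InnerProductSpace in
lemma hasFDerivAt_gradient (hφ : ContDiff ℝ 2 φ) (y : E) :
    HasFDerivAt (gradient φ)
      ((toDual ℝ E).symm.toLinearIsometry.toContinuousLinearMap.comp
        (fderiv ℝ (fderiv ℝ φ) y)) y :=
  ((toDual ℝ E).symm.toLinearIsometry.toContinuousLinearMap.hasFDerivAt).comp y
    ((hφ.fderiv_right (m := 1) le_rfl).differentiable one_ne_zero y).hasFDerivAt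

end Gradient

section Hessian

variable {d : ℕ} {φ : EuclideanSpace ℝ (Fin d) → ℝ}

lemma hasFDerivAt_gradient_hess (hφ : ContDiff ℝ 2 φ) (y : EuclideanSpace ℝ (Fin d)) :
    HasFDerivAt (gradient φ) (hess φ y) y :=
  (hasFDerivAt_gradient hφ y).differentiableAt.hasFDerivAt

lemma inner_hess_apply (hφ : ContDiff ℝ 2 φ) (y v w : EuclideanSpace ℝ (Fin d)) :
    ⟪hess φ y v, w⟫ = fderiv ℝ (fderiv ℝ φ) y v w := by
  rw [hess, (hasFDerivAt_gradient hφ y).fderiv]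
  exact InnerProductSpace.toDual_symm_apply

lemma isSymmetric_hess (hφ : ContDiff ℝ 2 φ) (y : EuclideanSpace ℝ (Fin d)) :
    (hess φ y : EuclideanSpace ℝ (Fin d) →ₗ[ℝ] EuclideanSpace ℝ (Fin d)).IsSymmetric := by
  intro v w
  rw [ContinuousLinearMap.coe_coe, real_inner_comm _ v, inner_hess_apply hφ, inner_hess_apply hφ]
  exact hφ.contDiffAt.isSymmSndFDerivAt (by simp) v w

lemma hasDerivAt_inner_gradient_add_smul (hφ : ContDiff ℝ 2 φ) (x v : EuclideanSpace ℝ (Fin d))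
    (t : ℝ) :
    HasDerivAt (fun t : ℝ => ⟪gradient φ (x + t • v), v⟫) ⟪hess φ (x + t • v) v, v⟫ t := by
  have hline : HasDerivAt (fun t : ℝ => x + t • v) v t :=
    ((hasDerivAt_id t).smul_const v).const_add x |>.congr_deriv (one_smul ℝ v)
  simpa using ((hasFDerivAt_gradient_hess hφ _).comp_hasDerivAt t hline).inner ℝ
    (hasDerivAt_const t v)

end Hessian

lemma le_add_deriv_add_of_deriv2_le {ψ ψ' ψ'' : ℝ → ℝ} {c : ℝ}
    (hψ : ∀ t, HasDerivAt ψ (ψ' t) t) (hψ' : ∀ t, HasDerivAt ψ' (ψ'' t) t)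
    (hc : ∀ t, ψ'' t ≤ c) : ψ 1 ≤ ψ 0 + ψ' 0 + c / 2 := by
  have hslope : Antitone fun t => ψ' t - c * t :=
    antitone_of_hasDerivAt_nonpos (f' := fun t => ψ'' t - c)
      (fun t => ((hψ' t).sub ((hasDerivAt_id' t).const_mul c)).congr_deriv (by rw [mul_one]))
      (fun t => sub_nonpos.2 (hc t))
  have hgap : ∀ t, HasDerivAt (fun t => ψ t - ψ' 0 * t - c / 2 * t ^ 2)
      (ψ' t - ψ' 0 - c * t) t := fun t =>
    (((hψ t).sub ((hasDerivAt_id' t).const_mul (ψ' 0))).sub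
      ((hasDerivAt_pow 2 t).const_mul (c / 2))).congr_deriv (by ring)
  have hanti : AntitoneOn (fun t => ψ t - ψ' 0 * t - c / 2 * t ^ 2) (Set.Ici 0) := by
    refine antitoneOn_of_hasDerivWithinAt_nonpos (convex_Ici 0)
      (fun t _ => (hgap t).continuousAt.continuousWithinAt)
      (fun t _ => (hgap t).hasDerivWithinAt) fun t ht => ?_
    have := hslope (interior_Ici.subset ht).le
    simp only [mul_zero, sub_zero] at this
    linarith
  have := hanti Set.self_mem_Ici (Set.mem_Ici.2 zero_le_one) zero_le_one
  norm_num at this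
  linarith

lemma add_deriv_add_le_of_le_deriv2 {ψ ψ' ψ'' : ℝ → ℝ} {c : ℝ}
    (hψ : ∀ t, HasDerivAt ψ (ψ' t) t) (hψ' : ∀ t, HasDerivAt ψ' (ψ'' t) t)
    (hc : ∀ t, c ≤ ψ'' t) : ψ 0 + ψ' 0 + c / 2 ≤ ψ 1 := by
  have := le_add_deriv_add_of_deriv2_le (fun t => (hψ t).neg) (fun t => (hψ' t).neg)
    (c := -c) (fun t => neg_le_neg (hc t))
  simp only [Pi.neg_apply] at this
  linarith

section Taylor

variable {d : ℕ} {φ : EuclideanSpace ℝ (Fin d) → ℝ} {C : ℝ} {x v : EuclideanSpace ℝ (Fin d)}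

lemma apply_add_le_of_hess_le (hφ : ContDiff ℝ 2 φ)
    (hC : ∀ y, ⟪hess φ y v, v⟫ ≤ C * ‖v‖ ^ 2) :
    φ (x + v) ≤ φ x + ⟪gradient φ x, v⟫ + C / 2 * ‖v‖ ^ 2 := by
  have := le_add_deriv_add_of_deriv2_le
    (hasDerivAt_apply_add_smul (hφ.differentiable two_ne_zero) x v)
    (hasDerivAt_inner_gradient_add_smul hφ x v) fun t => hC _
  simp only [zero_smul, add_zero, one_smul] at this
  linarith

lemma le_apply_add_of_le_hess (hφ : ContDiff ℝ 2 φ)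
    (hC : ∀ y, C * ‖v‖ ^ 2 ≤ ⟪hess φ y v, v⟫) :
    φ x + ⟪gradient φ x, v⟫ + C / 2 * ‖v‖ ^ 2 ≤ φ (x + v) := by
  have := add_deriv_add_le_of_le_deriv2
    (hasDerivAt_apply_add_smul (hφ.differentiable two_ne_zero) x v)
    (hasDerivAt_inner_gradient_add_smul hφ x v) fun t => hC _
  simp only [zero_smul, add_zero, one_smul] at this
  linarith

lemma apply_sub_apply_le_sq_norm_gradient_div {γ : ℝ} (hγ : 0 < γ) (hφ : ContDiff ℝ 2 φ)
    (hlow : ∀ y v, γ * ‖v‖ ^ 2 ≤ ⟪hess φ y v, v⟫) (x y : EuclideanSpace ℝ (Fin d)) :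
    φ x - φ y ≤ ‖gradient φ x‖ ^ 2 / (2 * γ) := by
  have hquad := le_apply_add_of_le_hess (x := x) hφ fun z => hlow z (y - x)
  rw [add_sub_cancel] at hquad
  have hcs := real_inner_le_norm (gradient φ x) (x - y)
  rw [← neg_sub, inner_neg_right, norm_neg] at hquad
  rw [le_div_iff₀ (by positivity)]
  nlinarith [sq_nonneg (‖gradient φ x‖ - γ * ‖x - y‖)]

end Taylor

section Operator

variable {E : Type*} [NormedAddCommGroup E] [InnerProductSpace ℝ E] {A : E →L[ℝ] E} {M : ℝ}

lemma sq_norm_apply_le_mul_inner_apply (hA : (A : E →ₗ[ℝ] E).IsSymmetric)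
    (hpos : ∀ v, 0 ≤ ⟪A v, v⟫) (hup : ∀ v, ⟪A v, v⟫ ≤ M * ‖v‖ ^ 2) (z : E) :
    ‖A z‖ ^ 2 ≤ M * ⟪A z, z⟫ := by
  let B : LinearMap.BilinForm ℝ E := (innerₗ E).comp (A : E →ₗ[ℝ] E)
  have hcs : ⟪A z, A z⟫ ^ 2 ≤ ⟪A z, z⟫ * ⟪A (A z), A z⟫ :=
    B.apply_sq_le_of_symm hpos
      (LinearMap.isSymm_def.2 fun u v => by
        simpa [B] using (hA.apply_clm u v).trans (real_inner_comm _ _)) z (A z)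
  rw [real_inner_self_eq_norm_sq] at hcs
  have hq : 0 ≤ ⟪A z, z⟫ := hpos z
  rcases eq_or_ne (A z) 0 with h0 | h0
  · simp [h0]
  · have : 0 < ‖A z‖ ^ 2 := by positivity
    nlinarith [mul_le_mul_of_nonneg_left (hup (A z)) hq]

lemma inner_le_neg_sq_norm_div_of_norm_apply_add_le [CompleteSpace E]
    (hA : (A : E →ₗ[ℝ] E).IsSymmetric) {m θ : ℝ} (hm : 0 < m) (hM : 0 < M)
    (hlow : ∀ v, m * ‖v‖ ^ 2 ≤ ⟪A v, v⟫) (hup : ∀ v, ⟪A v, v⟫ ≤ M * ‖v‖ ^ 2)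
    (hθ : θ ≤ 1 / 2 * √(m / M)) {g p : E} (hres : ‖A p + g‖ ≤ θ * ‖g‖) :
    ⟪p, g⟫ ≤ -‖g‖ ^ 2 / (2 * M) := by
  have hpos : ∀ v, 0 ≤ ⟪A v, v⟫ := fun v => (mul_nonneg hm.le (sq_nonneg _)).trans (hlow v)
  obtain ⟨z, rfl⟩ : ∃ z, A z = g := by
    have hunit : IsUnit A := A.isUnit_of_forall_le_norm_inner_map (c := m.toNNReal)
      (Real.toNNReal_pos.2 hm) fun v => by
        rw [Real.coe_toNNReal _ hm.le, mul_comm]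
        exact (hlow v).trans (Real.le_norm_self _)
    exact (ContinuousLinearMap.isUnit_iff_bijective.1 hunit).2 _
  set q := ⟪A z, z⟫
  have hAz : ‖A z‖ ^ 2 ≤ M * q := sq_norm_apply_le_mul_inner_apply hA hpos hup z
  have hz : m * ‖z‖ ^ 2 ≤ q := hlow z
  have hsqrt : √(m / M) * (‖A z‖ * ‖z‖) ≤ q := by
    refine le_of_sq_le_sq ?_ (hpos z)
    rw [mul_pow, mul_pow, Real.sq_sqrt (by positivity)]
    calc m / M * (‖A z‖ ^ 2 * ‖z‖ ^ 2) = (‖A z‖ ^ 2 / M) * (m * ‖z‖ ^ 2) := by ring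
      _ ≤ q * q := by
        gcongr
        · exact hpos z
        · rwa [div_le_iff₀ hM, mul_comm]
      _ = q ^ 2 := (sq q).symm
  calc ⟪p, A z⟫ = ⟪A p + A z, z⟫ - q := by rw [inner_add_left, hA.apply_clm]; ring
    _ ≤ θ * ‖A z‖ * ‖z‖ - q := by
        gcongr
        exact (real_inner_le_norm _ _).trans (mul_le_mul_of_nonneg_right hres (norm_nonneg z))
    _ ≤ 1 / 2 * √(m / M) * ‖A z‖ * ‖z‖ - q := by gcongr
    _ ≤ -q / 2 := by linarith
    _ ≤ -‖A z‖ ^ 2 / (2 * M) := by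
        rw [neg_div, neg_div, neg_le_neg_iff, div_le_div_iff₀ (by positivity) two_pos]
        linarith

end Operator

lemma Finset.sum_le_sum_top_of_card_eq {ι : Type*} [DecidableEq ι] {K : ι → ℝ}
    {Q T : Finset ι} (hQ : ∀ i ∈ Q, ∀ j ∉ Q, K j ≤ K i) (hcard : T.card = Q.card) :
    ∑ i ∈ T, K i ≤ ∑ i ∈ Q, K i := by
  have hd : (T \ Q).card = (Q \ T).card := by
    have hT := Finset.card_sdiff_add_card_inter T Q
    have hQ := Finset.card_sdiff_add_card_inter Q T
    rw [Finset.inter_comm] at hQ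
    omega
  let e := Finset.equivOfCardEq hd
  have hswap : ∑ i ∈ T \ Q, K i ≤ ∑ i ∈ Q \ T, K i :=
    calc ∑ i ∈ T \ Q, K i = ∑ i : ↥(T \ Q), K i := (Finset.sum_coe_sort _ _).symm
      _ ≤ ∑ i : ↥(T \ Q), K (e i) := Finset.sum_le_sum fun i _ =>
          hQ _ (Finset.mem_sdiff.1 (e i).2).1 _ (Finset.mem_sdiff.1 i.2).2
      _ = ∑ i ∈ Q \ T, K i := by rw [e.sum_comp (K ·), Finset.sum_coe_sort]
  have hT := Finset.sum_inter_add_sum_sdiff T Q K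
  have hQ := Finset.sum_inter_add_sum_sdiff Q T K
  rw [Finset.inter_comm] at hQ
  linarith

section RidgeHess

variable {d n s : ℕ} {f : Fin n → EuclideanSpace ℝ (Fin d) → ℝ} {S : Fin s → Fin n} {lam : ℝ}
  {x : EuclideanSpace ℝ (Fin d)}

lemma inner_ridgeHess (v w : EuclideanSpace ℝ (Fin d)) :
    ⟪ridgeHess f S lam x v, w⟫ = ⟪((s : ℝ)⁻¹ • ∑ j, hess (f (S j)) x) v, w⟫ + lam * ⟪v, w⟫ := by
  simp only [ridgeHess, add_apply, smul_apply,
    ContinuousLinearMap.id_apply, inner_add_left, real_inner_smul_left]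

lemma isSymmetric_ridgeHess (hf : ∀ i, ContDiff ℝ 2 (f i)) :
    (ridgeHess f S lam x :
      EuclideanSpace ℝ (Fin d) →ₗ[ℝ] EuclideanSpace ℝ (Fin d)).IsSymmetric := by
  simp only [ridgeHess, ContinuousLinearMap.toLinearMap_add, ContinuousLinearMap.toLinearMap_smul,
    ContinuousLinearMap.toLinearMap_sum, ContinuousLinearMap.coe_id]
  exact ((LinearMap.isSymmetric_sum _ fun j _ => isSymmetric_hess (hf _) x).smul rfl).add
    (LinearMap.IsSymmetric.id.smul rfl)

lemma le_inner_ridgeHess {m : ℝ}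
    (hH : ∀ v, m * ‖v‖ ^ 2 ≤ ⟪((s : ℝ)⁻¹ • ∑ j, hess (f (S j)) x) v, v⟫)
    (v : EuclideanSpace ℝ (Fin d)) :
    (m + lam) * ‖v‖ ^ 2 ≤ ⟪ridgeHess f S lam x v, v⟫ := by
  rw [inner_ridgeHess, real_inner_self_eq_norm_sq]
  linarith [hH v]

lemma inner_ridgeHess_le {K : Fin n → ℝ}
    (hfK : ∀ i y v, ⟪hess (f i) y v, v⟫ ≤ K i * ‖v‖ ^ 2) (hS : Function.Injective S)
    {Q : Finset (Fin n)} (hQcard : Q.card = s) (hQ : ∀ i ∈ Q, ∀ j ∉ Q, K j ≤ K i)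
    (v : EuclideanSpace ℝ (Fin d)) :
    ⟪ridgeHess f S lam x v, v⟫ ≤ ((∑ i ∈ Q, K i) / s + lam) * ‖v‖ ^ 2 := by
  have hsum : ∑ j, K (S j) ≤ ∑ i ∈ Q, K i := by
    rw [← Finset.sum_image fun a _ b _ h => hS h]
    refine Finset.sum_le_sum_top_of_card_eq hQ ?_
    rw [Finset.card_image_of_injective _ hS, hQcard, Finset.card_univ, Fintype.card_fin]
  rw [inner_ridgeHess, smul_apply, real_inner_smul_left,
    sum_apply, sum_inner, real_inner_self_eq_norm_sq]
  calc (s : ℝ)⁻¹ * ∑ j, ⟪hess (f (S j)) x v, v⟫ + lam * ‖v‖ ^ 2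
      ≤ (s : ℝ)⁻¹ * ((∑ j, K (S j)) * ‖v‖ ^ 2) + lam * ‖v‖ ^ 2 := by
        rw [Finset.sum_mul]
        gcongr with j
        exact hfK _ _ _
    _ ≤ (s : ℝ)⁻¹ * ((∑ i ∈ Q, K i) * ‖v‖ ^ 2) + lam * ‖v‖ ^ 2 := by gcongr
    _ = ((∑ i ∈ Q, K i) / s + lam) * ‖v‖ ^ 2 := by ring

end RidgeHess

section Armijo

variable {d : ℕ} {φ : EuclideanSpace ℝ (Fin d) → ℝ} {x p : EuclideanSpace ℝ (Fin d)} {α β : ℝ}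

def ArmijoCondition (φ : EuclideanSpace ℝ (Fin d) → ℝ) (β : ℝ) (x p : EuclideanSpace ℝ (Fin d))
    (α : ℝ) : Prop :=
  φ (x + α • p) ≤ φ x + α * β * ⟪p, gradient φ x⟫

lemma armijoCondition_of_mul_le (hφ : ContDiff ℝ 2 φ) {L c : ℝ}
    (hL : ∀ y v, ⟪hess φ y v, v⟫ ≤ L * ‖v‖ ^ 2) (hdesc : ⟪p, gradient φ x⟫ ≤ -(c * ‖p‖ ^ 2))
    (hβ : β ≤ 1) (hα : 0 ≤ α) (hαL : α * L ≤ 2 * (1 - β) * c) :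
    ArmijoCondition φ β x p α := by
  have hquad := apply_add_le_of_hess_le (x := x) (v := α • p) hφ fun y => hL y _
  rw [real_inner_smul_right, norm_smul, mul_pow, Real.norm_eq_abs, sq_abs,
    real_inner_comm] at hquad
  have hdesc' : α * (1 - β) * ⟪p, gradient φ x⟫ ≤ -(α * (1 - β) * (c * ‖p‖ ^ 2)) := by
    rw [← mul_neg]
    exact mul_le_mul_of_nonneg_left hdesc (mul_nonneg hα (sub_nonneg.2 hβ))
  have hstep : α * L * (α * ‖p‖ ^ 2) ≤ 2 * (1 - β) * c * (α * ‖p‖ ^ 2) :=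
    mul_le_mul_of_nonneg_right hαL (by positivity)
  unfold ArmijoCondition
  linarith

lemma ArmijoCondition.sub_le_mul_sub (harm : ArmijoCondition φ β x p α) (hφ : ContDiff ℝ 2 φ)
    {γ M : ℝ} (hγ : 0 < γ) (hlow : ∀ y v, γ * ‖v‖ ^ 2 ≤ ⟪hess φ y v, v⟫) (hM : 0 < M)
    (hdesc : ⟪p, gradient φ x⟫ ≤ -‖gradient φ x‖ ^ 2 / (2 * M)) (hαβ : 0 ≤ α * β)
    (y : EuclideanSpace ℝ (Fin d)) :
    φ (x + α • p) - φ y ≤ (1 - α * β * γ / M) * (φ x - φ y) := by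
  have hPL : α * β * γ / M * (φ x - φ y) ≤ α * β * (‖gradient φ x‖ ^ 2 / (2 * M)) :=
    calc α * β * γ / M * (φ x - φ y)
        ≤ α * β * γ / M * (‖gradient φ x‖ ^ 2 / (2 * γ)) := by
          gcongr
          exact apply_sub_apply_le_sq_norm_gradient_div hγ hφ hlow x y
      _ = α * β * (‖gradient φ x‖ ^ 2 / (2 * M)) := by field_simp
  have hdec : α * β * ⟪p, gradient φ x⟫ ≤ α * β * (-‖gradient φ x‖ ^ 2 / (2 * M)) :=
    mul_le_mul_of_nonneg_left hdesc hαβ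
  unfold ArmijoCondition at harm
  rw [neg_div] at hdec
  linarith

end Armijo

theorem stmt_7_general {d n s : ℕ} (hs : 0 < s)
    (f : Fin n → EuclideanSpace ℝ (Fin d) → ℝ) (K : Fin n → ℝ)
    (F : EuclideanSpace ℝ (Fin d) → ℝ)
    (γ Kc Khats β ε θ₁ θ₂ lam : ℝ) (x xstar p : EuclideanSpace ℝ (Fin d))
    (S : Fin s → Fin n)
    -- each fᵢ is twice continuously differentiable, convex, with `∇²fᵢ ⪯ Kᵢ I`
    (hf : ∀ i, ContDiff ℝ 2 (f i))
    (hKpos : ∀ i, 0 < K i)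
    (hfK : ∀ i y v, ⟪(hess (f i) y) v, v⟫ ≤ K i * ‖v‖ ^ 2)
    -- `F = (1/n) ∑ fᵢ`
    (hF : ∀ y, F y = (1 / n : ℝ) * ∑ i, f i y)
    -- `γ I ⪯ ∇²F ⪯ K I` with `0 < γ ≤ K`
    (hγ : 0 < γ) (hγK : γ ≤ Kc)
    (hFlow : ∀ y v, γ * ‖v‖ ^ 2 ≤ ⟪(hess F y) v, v⟫)
    (hFup : ∀ y v, ⟪(hess F y) v, v⟫ ≤ Kc * ‖v‖ ^ 2)
    -- `K̂_s` is the average of the `s` largest `Kᵢ`'s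
    (hKhats : ∃ Q : Finset (Fin n), Q.card = s ∧
        (∀ i ∈ Q, ∀ j ∉ Q, K j ≤ K i) ∧ Khats = (∑ i ∈ Q, K i) / s)
    (hβ : 0 < β) (hβ1 : β < 1) (hε1 : ε < 1)
    (hθ₂1 : θ₂ < 1) (hlam : 0 ≤ lam)
    -- the sample consists of distinct indices
    (hSinj : Function.Injective S)
    -- `λ_min(H) ≥ (1-ε)γ` for the sub-sampled Hessian `H = H(x)`
    (hH : ∀ v, (1 - ε) * γ * ‖v‖ ^ 2 ≤
        ⟪((s : ℝ)⁻¹ • ∑ j, hess (f (S j)) x) v, v⟫)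
    -- `0 ≤ θ₁ ≤ (1/2)√(((1-ε)γ+λ)/(K̂_s+λ))`
    (hθ₁le : θ₁ ≤ (1 / 2) * Real.sqrt (((1 - ε) * γ + lam) / (Khats + lam)))
    -- inexactness conditions on the update direction `p`, w.r.t. `Ĥ = H + λ I`
    (hp₁ : ‖(ridgeHess f S lam x) p + gradient F x‖ ≤ θ₁ * ‖gradient F x‖)
    (hp₂ : ⟪p, gradient F x⟫ ≤ -(1 - θ₂) * ⟪p, (ridgeHess f S lam x) p⟫) :
    -- any `α > 0` satisfying the Armijo condition yields the stated linear rate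
    (∀ α : ℝ, 0 < α → F (x + α • p) ≤ F x + α * β * ⟪p, gradient F x⟫ →
        F (x + α • p) - F xstar ≤
          (1 - α * β * γ / (Khats + lam)) * (F x - F xstar)) ∧
    -- and any `0 < α ≤ 2(1-θ₂)(1-β)((1-ε)γ+λ)/K` satisfies the Armijo condition
    (∀ α : ℝ, 0 < α → α ≤ 2 * (1 - θ₂) * (1 - β) * ((1 - ε) * γ + lam) / Kc →
        F (x + α • p) ≤ F x + α * β * ⟪p, gradient F x⟫) := by
  obtain ⟨Q, hQcard, hQtop, rfl⟩ := hKhats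
  have hFc : ContDiff ℝ 2 F := by
    rw [funext hF]
    exact contDiff_const.mul (ContDiff.sum fun i _ => hf i)
  have hm : 0 < (1 - ε) * γ + lam := add_pos_of_pos_of_nonneg (mul_pos (sub_pos.2 hε1) hγ) hlam
  have hM : 0 < (∑ i ∈ Q, K i) / s + lam := by
    have : 0 < ∑ i ∈ Q, K i := Finset.sum_pos (fun i _ => hKpos i) (Finset.card_pos.1 (by omega))
    positivity
  have hlow := le_inner_ridgeHess (lam := lam) hH
  have hdesc := inner_le_neg_sq_norm_div_of_norm_apply_add_le (isSymmetric_ridgeHess hf) hm hM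
    hlow (inner_ridgeHess_le hfK hSinj hQcard hQtop) hθ₁le hp₁
  have hcurv : ⟪p, gradient F x⟫ ≤ -((1 - θ₂) * ((1 - ε) * γ + lam) * ‖p‖ ^ 2) := by
    have hpHp := (hlow p).trans_eq (real_inner_comm _ _)
    nlinarith
  refine ⟨fun α hα harm => ArmijoCondition.sub_le_mul_sub harm hFc hγ hFlow hM hdesc
    (by positivity) xstar, fun α hα hαK => armijoCondition_of_mul_le hFc hFup hcurv hβ1.le hα.le ?_⟩
  rw [le_div_iff₀ (hγ.trans_le hγK)] at hαK
  linarith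

theorem stmt_7 {d n s : ℕ} (hn : 0 < n) (hs : 0 < s)
    (f : Fin n → EuclideanSpace ℝ (Fin d) → ℝ) (K : Fin n → ℝ)
    (F : EuclideanSpace ℝ (Fin d) → ℝ)
    (γ Kc Khats β ε θ₁ θ₂ lam : ℝ) (x xstar p : EuclideanSpace ℝ (Fin d))
    (S : Fin s → Fin n)
    -- each fᵢ is twice continuously differentiable, convex, with `∇²fᵢ ⪯ Kᵢ I`
    (hf : ∀ i, ContDiff ℝ 2 (f i))
    (hKpos : ∀ i, 0 < K i)
    (hfpsd : ∀ i y v, 0 ≤ ⟪(hess (f i) y) v, v⟫)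
    (hfK : ∀ i y v, ⟪(hess (f i) y) v, v⟫ ≤ K i * ‖v‖ ^ 2)
    -- `F = (1/n) ∑ fᵢ`
    (hF : ∀ y, F y = (1 / n : ℝ) * ∑ i, f i y)
    -- `γ I ⪯ ∇²F ⪯ K I` with `0 < γ ≤ K`
    (hγ : 0 < γ) (hγK : γ ≤ Kc)
    (hFlow : ∀ y v, γ * ‖v‖ ^ 2 ≤ ⟪(hess F y) v, v⟫)
    (hFup : ∀ y v, ⟪(hess F y) v, v⟫ ≤ Kc * ‖v‖ ^ 2)
    -- `xstar` is the (unique) minimizer of `F`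
    (hmin : ∀ y, F xstar ≤ F y)
    -- `K̂_s` is the average of the `s` largest `Kᵢ`'s
    (hKhats : ∃ Q : Finset (Fin n), Q.card = s ∧
        (∀ i ∈ Q, ∀ j ∉ Q, K j ≤ K i) ∧ Khats = (∑ i ∈ Q, K i) / s)
    (hβ : 0 < β) (hβ1 : β < 1) (hε : 0 < ε) (hε1 : ε < 1)
    (hθ₂0 : 0 < θ₂) (hθ₂1 : θ₂ < 1) (hlam : 0 ≤ lam)
    -- the sample consists of distinct indices
    (hSinj : Function.Injective S)
    -- `λ_min(H) ≥ (1-ε)γ` for the sub-sampled Hessian `H = H(x)`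
    (hH : ∀ v, (1 - ε) * γ * ‖v‖ ^ 2 ≤
        ⟪((s : ℝ)⁻¹ • ∑ j, hess (f (S j)) x) v, v⟫)
    -- `0 ≤ θ₁ ≤ (1/2)√(((1-ε)γ+λ)/(K̂_s+λ))`
    (hθ₁0 : 0 ≤ θ₁)
    (hθ₁le : θ₁ ≤ (1 / 2) * Real.sqrt (((1 - ε) * γ + lam) / (Khats + lam)))
    -- inexactness conditions on the update direction `p`, w.r.t. `Ĥ = H + λ I`
    (hp₁ : ‖(ridgeHess f S lam x) p + gradient F x‖ ≤ θ₁ * ‖gradient F x‖)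
    (hp₂ : ⟪p, gradient F x⟫ ≤ -(1 - θ₂) * ⟪p, (ridgeHess f S lam x) p⟫) :
    -- any `α > 0` satisfying the Armijo condition yields the stated linear rate
    (∀ α : ℝ, 0 < α → F (x + α • p) ≤ F x + α * β * ⟪p, gradient F x⟫ →
        F (x + α • p) - F xstar ≤
          (1 - α * β * γ / (Khats + lam)) * (F x - F xstar)) ∧
    -- and any `0 < α ≤ 2(1-θ₂)(1-β)((1-ε)γ+λ)/K` satisfies the Armijo condition
    (∀ α : ℝ, 0 < α → α ≤ 2 * (1 - θ₂) * (1 - β) * ((1 - ε) * γ + lam) / Kc →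
        F (x + α • p) ≤ F x + α * β * ⟪p, gradient F x⟫) :=
  stmt_7_general hs f K F γ Kc Khats β ε θ₁ θ₂ lam x xstar p S hf hKpos hfK hF hγ hγK hFlow hFup
    hKhats hβ hβ1 hε1 hθ₂1 hlam hSinj hH hθ₁le hp₁ hp₂
end
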